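/- Let Δ be a simplicial complex on vertices 1,…,n that is not the boundary of the (n−1)-simplex, with variables x_σ for faces σ ∈ Δ, and let m'_v be the squarefree product of: x_{G∖{v}} over facets G containing v, x_F over facets F not containing v, and x_σ over maximal proper faces σ of facets F not containing v. Then the ideal J'_Δ = (m'_1,…,m'_n) has no redundant generators: m'_i does not divide m'_j for i ≠ j. -/

import Mathlib

noncomputable section
attribute [local instance] Classical.propDecidable

/-- The simplicial complex generated by a set of faces: all nonempty subsets. -/
def gen {V : Type} (S : Finset (Finset V)) : Finset (Finset V) :=
  S.biUnion fun F => F.powerset.filter (· ≠ ∅)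

/-- The facets (maximal faces) of a complex given by its finite set of faces. -/
def facets {V : Type} (Δ : Finset (Finset V)) : Finset (Finset V) :=
  Δ.filter fun F => ∀ G ∈ Δ, F ⊆ G → F = G

/-- A (finite, abstract) simplicial complex: nonempty faces, closed under nonempty subsets. -/
def IsComplex {V : Type} (Δ : Finset (Finset V)) : Prop :=
  ∅ ∉ Δ ∧ ∀ F ∈ Δ, ∀ G, G ⊆ F → G ≠ ∅ → G ∈ Δ

/-- `F` is a leaf of `Δ`: `F` is a facet which is either the only facet, or
there is another facet `G` (a joint) with `F ∩ (Δ ∖ F) ⊆ G`, i.e. the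
intersection of `F` with any other facet is contained in `G`. -/
def IsLeaf {V : Type} (Δ : Finset (Finset V)) (F : Finset V) : Prop :=
  F ∈ facets Δ ∧ (facets Δ = {F} ∨
    ∃ G ∈ facets Δ, G ≠ F ∧ ∀ H ∈ facets Δ, H ≠ F → F ∩ H ⊆ G)

def HasLeaf {V : Type} (Δ : Finset (Finset V)) : Prop := ∃ F, IsLeaf Δ F

/-- A forest: every nonempty subcollection (complex generated by a subset of the
facets) has a leaf. -/
def IsForest {V : Type} (Δ : Finset (Finset V)) : Prop :=
  ∀ S ⊆ facets Δ, S.Nonempty → HasLeaf (gen S)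

/-- Vertex set of a complex. -/
def vtx {V : Type} (Δ : Finset (Finset V)) : Finset V := Δ.sup id

/-- Connectedness: nonempty, and any two vertices are joined by a chain of faces. -/
def Conn {V : Type} (Δ : Finset (Finset V)) : Prop :=
  Δ.Nonempty ∧ ∀ u ∈ vtx Δ, ∀ v ∈ vtx Δ,
    Relation.ReflTransGen (fun a b => ∃ σ ∈ Δ, a ∈ σ ∧ b ∈ σ) u v

/-- A simplicial tree is a connected forest. -/
def IsTree {V : Type} (Δ : Finset (Finset V)) : Prop := Conn Δ ∧ IsForest Δ

/-! Monomials in the variables `x_σ`, indexed by the nonempty faces `σ` of a complex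
`Δ`.  All monomials arising in the Peeva–Velasco construction and its refinement are
squarefree, so we represent a squarefree monomial by its finite set of variables
(a `Finset` of faces); then divisibility is `⊆`, lcm is `∪`, and a product of
monomials with disjoint supports is `∪`. -/

/-- The Peeva–Velasco generator `m_v = ∏_{σ ∈ Δ, v ∉ σ} x_σ`. -/
def mPV {V : Type} (Δ : Finset (Finset V)) (v : V) : Finset (Finset V) :=
  Δ.filter fun σ => v ∉ σ

/-- `A_Δ(v)`: the facets of `Δ` not containing `v`. -/
def AF {V : Type} (Δ : Finset (Finset V)) (v : V) : Finset (Finset V) :=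
  (facets Δ).filter fun F => v ∉ F

/-- `B_Δ(v)`: the facets of `Δ` containing `v`. -/
def BF {V : Type} (Δ : Finset (Finset V)) (v : V) : Finset (Finset V) :=
  (facets Δ).filter fun F => v ∈ F

/-- The refined generator `m'_v`: the squarefree product of the variables
`x_{G∖{v}}` for facets `G ∋ v`, the variables `x_F` for facets `F ∌ v`, and the
variables `x_σ` for maximal proper (nonempty) faces `σ` of such facets `F`. -/
def mPV' {V : Type} (Δ : Finset (Finset V)) (v : V) : Finset (Finset V) :=
  ((BF Δ v).image (fun G => G.erase v)).filter (· ≠ ∅) ∪ AF Δ v ∪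
    (AF Δ v).biUnion fun F => F.powerset.filter fun σ => σ.card + 1 = F.card ∧ σ ≠ ∅

/-- `Δ` is the boundary of the full simplex on its `n` vertices: all proper
nonempty subsets of the vertex set. -/
def IsBoundaryOfFullSimplex {n : ℕ} (Δ : Finset (Finset (Fin n))) : Prop :=
  Δ = (Finset.univ : Finset (Fin n)).powerset.filter
        fun s => s ≠ ∅ ∧ s ≠ Finset.univ

/-! The generator `m'_v` involves no variable `x_σ` with `v ∈ σ`, while for `u ≠ v` the
generator `m'_u` involves one: take a facet `G ∋ v`; then `x_{G∖{u}}` (if `u ∈ G`) or `x_G`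
(if `u ∉ G`) divides `m'_u`. -/

section

variable {V : Type} {Δ : Finset (Finset V)}

theorem exists_mem_facets_superset {σ : Finset V} (hσ : σ ∈ Δ) :
    ∃ G ∈ facets Δ, σ ⊆ G := by
  obtain ⟨G, hσG, hG⟩ := Δ.exists_le_maximal hσ
  exact ⟨G, Finset.mem_filter.2 ⟨hG.prop, fun H hH hGH => le_antisymm hGH (hG.2 hH hGH)⟩, hσG⟩

theorem notMem_of_mem_mPV' {v : V} {σ : Finset V} (hσ : σ ∈ mPV' Δ v) : v ∉ σ := by
  simp only [mPV', AF, BF, Finset.mem_union, Finset.mem_filter, Finset.mem_image,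
    Finset.mem_biUnion, Finset.mem_powerset] at hσ
  rcases hσ with (⟨⟨G, -, rfl⟩, -⟩ | ⟨-, hvσ⟩) | ⟨F, ⟨-, hvF⟩, hσF, -⟩
  · exact Finset.notMem_erase v G
  · exact hvσ
  · exact fun hvσ => hvF (hσF hvσ)

theorem exists_mem_mPV'_of_mem_facets {u v : V} (huv : u ≠ v) {G : Finset V}
    (hG : G ∈ facets Δ) (hvG : v ∈ G) : ∃ σ ∈ mPV' Δ u, v ∈ σ := by
  by_cases huG : u ∈ G
  · have hvσ : v ∈ G.erase u := Finset.mem_erase.2 ⟨huv.symm, hvG⟩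
    refine ⟨G.erase u, ?_, hvσ⟩
    simp only [mPV', BF, Finset.mem_union, Finset.mem_filter, Finset.mem_image]
    exact Or.inl (Or.inl ⟨⟨G, ⟨hG, huG⟩, rfl⟩, Finset.ne_empty_of_mem hvσ⟩)
  · refine ⟨G, ?_, hvG⟩
    simp only [mPV', AF, Finset.mem_union, Finset.mem_filter]
    exact Or.inl (Or.inr ⟨hG, huG⟩)

end

theorem mPV'_no_redundant_generators_general {n : ℕ} (Δ : Finset (Finset (Fin n)))
    (hvtx : ∀ v : Fin n, ({v} : Finset (Fin n)) ∈ Δ) :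
    ∀ i j : Fin n, i ≠ j → ¬ mPV' Δ i ⊆ mPV' Δ j := by
  intro i j hij hsub
  obtain ⟨G, hG, hjG⟩ := exists_mem_facets_superset (hvtx j)
  obtain ⟨σ, hσ, hjσ⟩ := exists_mem_mPV'_of_mem_facets hij hG (Finset.singleton_subset_iff.1 hjG)
  exact notMem_of_mem_mPV' (hsub hσ) hjσ

/-- For a simplicial complex `Δ` on vertices `1, …, n`, not the
boundary of the `(n-1)`-simplex, and in which every vertex lies in some face, the
ideal `J'_Δ = (m'_1, …, m'_n)` has no redundant generators: `m'_i ∤ m'_j` for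
`i ≠ j` (for squarefree monomials, divisibility is containment of supports). -/
theorem mPV'_no_redundant_generators {n : ℕ} (Δ : Finset (Finset (Fin n)))
    (hΔ : IsComplex Δ) (hvtx : ∀ v : Fin n, ({v} : Finset (Fin n)) ∈ Δ)
    (hnb : ¬ IsBoundaryOfFullSimplex Δ) :
    ∀ i j : Fin n, i ≠ j → ¬ mPV' Δ i ⊆ mPV' Δ j :=
  mPV'_no_redundant_generators_general Δ hvtx
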